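/- Let S be a finite simplicial surface (every edge is contained in exactly two faces, each face has exactly three edges and three vertices, each edge has two vertices). Then any function T₂ from the set of faces to 3-element multisets of ℤ/12ℤ extends to a tonnetz: there exists a map T on all simplices agreeing with T₂ on faces, together with bijections ∂_σ from the codimension-1 faces of each positive-dimensional simplex σ to the multiset T(σ) satisfying ∂_σ(τ) ∈ T(τ), and bijections Δ_ρ from the simplices covering each ρ of dimension ≤ 1 to T(ρ) satisfying Δ_ρ(τ) ∈ T(τ). -/
import Mathlib


/-- A finite combinatorial triangulated surface: vertices, edges and faces,
each edge has two vertices, each face has three edges, and each edge is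
contained in exactly two faces. -/
structure TriSurface where
  V : Type
  E : Type
  F : Type
  instV : DecidableEq V
  instE : DecidableEq E
  instF : DecidableEq F
  fintE : Fintype E
  fintF : Fintype F
  /-- the two endpoints of an edge -/
  ends : E → Finset V
  /-- the three edges of a face -/
  sides : F → Finset E
  ends_card : ∀ e, (ends e).card = 2
  sides_card : ∀ f, (sides f).card = 3
  /-- each edge lies in exactly two faces -/
  edge_faces : ∀ e : E, ∃ f g : F, f ≠ g ∧ e ∈ sides f ∧ e ∈ sides g ∧
      ∀ h : F, e ∈ sides h → h = f ∨ h = g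

attribute [instance] TriSurface.instV TriSurface.instE TriSurface.instF
  TriSurface.fintE TriSurface.fintF

/-- A simplicial surface tonnetz: multisets of pitch classes attached to
vertices, edges and faces, together with downwards and upwards coherence.
A "bijection" from a finite set of simplices to a multiset `C` is encoded as a
function whose multiset of values over that set equals `C`. -/
structure Tonnetz (S : TriSurface) where
  /-- label of a vertex -/
  TV : S.V → Multiset (ZMod 12)
  /-- label of an edge -/
  TE : S.E → Multiset (ZMod 12)
  /-- label of a face -/
  TF : S.F → Multiset (ZMod 12)
  /-- downwards coherence for faces: a bijection `∂_σ` from the edges of a face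
  `σ` to `T(σ)` with `∂_σ(τ) ∈ T(τ)` -/
  downF : ∀ σ : S.F, ∃ φ : S.E → ZMod 12,
    (S.sides σ).val.map φ = TF σ ∧ ∀ τ ∈ S.sides σ, φ τ ∈ TE τ
  /-- downwards coherence for edges -/
  downE : ∀ τ : S.E, ∃ φ : S.V → ZMod 12,
    (S.ends τ).val.map φ = TE τ ∧ ∀ ρ ∈ S.ends τ, φ ρ ∈ TV ρ
  /-- upwards coherence for vertices: a bijection `Δ_ρ` from the edges
  containing `ρ` to `T(ρ)` with `Δ_ρ(τ) ∈ T(τ)` -/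
  upV : ∀ ρ : S.V, ∃ φ : S.E → ZMod 12,
    (Finset.univ.filter (fun τ => ρ ∈ S.ends τ)).val.map φ = TV ρ ∧
    ∀ τ : S.E, ρ ∈ S.ends τ → φ τ ∈ TE τ
  /-- upwards coherence for edges -/
  upE : ∀ τ : S.E, ∃ φ : S.F → ZMod 12,
    (Finset.univ.filter (fun σ => τ ∈ S.sides σ)).val.map φ = TE τ ∧
    ∀ σ : S.F, τ ∈ S.sides σ → φ σ ∈ TF σ

lemma exists_map_eq {α β : Type*} [DecidableEq α] [DecidableEq β] [Inhabited β] :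
    ∀ (s : Finset α) (m : Multiset β), s.card = Multiset.card m →
      ∃ φ : α → β, s.val.map φ = m := by
  intro s
  induction s using Finset.induction_on with
  | empty =>
    intro m hm
    refine ⟨fun _ => default, ?_⟩
    rw [Multiset.card_eq_zero.mp hm.symm]
    rfl
  | @insert a s ha ih =>
    intro m hm
    have hm0 : m ≠ 0 := by
      intro h0
      rw [h0, Finset.card_insert_of_notMem ha] at hm
      simp at hm
    obtain ⟨b, hb⟩ := Multiset.exists_mem_of_ne_zero hm0
    obtain ⟨φ, hφ⟩ := ih (m.erase b) (by
      have h1 := Multiset.card_erase_of_mem hb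
      have h2 : 0 < Multiset.card m := Multiset.card_pos.mpr hm0
      rw [Nat.pred_eq_sub_one] at h1
      rw [Finset.card_insert_of_notMem ha] at hm
      omega)
    refine ⟨Function.update φ a b, ?_⟩
    have hmap : Multiset.map (Function.update φ a b) s.val = Multiset.map φ s.val :=
      Multiset.map_congr rfl (fun x hx =>
        Function.update_of_ne (by rintro rfl; exact ha hx) _ _)
    rw [Finset.insert_val, Multiset.ndinsert_of_notMem (by simpa using ha),
      Multiset.map_cons, Function.update_self, hmap, hφ, Multiset.cons_erase hb]

/-- Any assignment of 3-element multisets to the faces of a finite triangulated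
surface extends to a tonnetz. -/
theorem faces_extend_to_tonnetz (S : TriSurface)
    (T₂ : S.F → Multiset (ZMod 12)) (h : ∀ σ, Multiset.card (T₂ σ) = 3) :
    ∃ T : Tonnetz S, T.TF = T₂ := by
  classical
  choose f g hfg hf hg huniq using S.edge_faces
  have hd : ∀ σ : S.F, ∃ φ : S.E → ZMod 12, (S.sides σ).val.map φ = T₂ σ :=
    fun σ => exists_map_eq _ _ (by rw [S.sides_card, h])
  choose d hd using hd
  set TE : S.E → Multiset (ZMod 12) := fun τ => {d (f τ) τ, d (g τ) τ} with hTE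
  have he : ∀ τ : S.E, ∃ φ : S.V → ZMod 12, (S.ends τ).val.map φ = TE τ :=
    fun τ => exists_map_eq _ _ (by rw [S.ends_card]; rfl)
  choose e he using he
  set TV : S.V → Multiset (ZMod 12) := fun ρ =>
    (Finset.univ.filter (fun τ => ρ ∈ S.ends τ)).val.map (fun τ => e τ ρ) with hTV
  refine ⟨⟨TV, TE, T₂, ?_, ?_, ?_, ?_⟩, rfl⟩
  · intro σ
    refine ⟨d σ, hd σ, fun τ hτ => ?_⟩
    rcases huniq τ σ hτ with rfl | rfl <;> simp [hTE]
  · intro τ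
    refine ⟨e τ, he τ, fun ρ hρ => ?_⟩
    exact Multiset.mem_map.mpr ⟨τ, by simpa using hρ, rfl⟩
  · intro ρ
    exact ⟨fun τ => e τ ρ, rfl, fun τ hτ => by
      rw [← he τ]; exact Multiset.mem_map.mpr ⟨ρ, hτ, rfl⟩⟩
  · intro τ
    refine ⟨fun σ => d σ τ, ?_, fun σ hσ => by
      rw [← hd σ]; exact Multiset.mem_map.mpr ⟨τ, hσ, rfl⟩⟩
    have hset : Finset.univ.filter (fun σ => τ ∈ S.sides σ) = {f τ, g τ} := by
      ext σ
      simp only [Finset.mem_filter, Finset.mem_univ, true_and, Finset.mem_insert,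
        Finset.mem_singleton]
      constructor
      · exact huniq τ σ
      · rintro (rfl | rfl)
        · exact hf τ
        · exact hg τ
    rw [hset]
    have hv : ({f τ, g τ} : Finset S.F).val = {f τ, g τ} := by
      rw [Finset.insert_val, Multiset.ndinsert_of_notMem (by simpa using hfg τ)]
      rfl
    rw [hv]
    simp [hTE]
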